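/- Let ζ₀ be the smallest ζ > 0 at which the function φ(ζ) = sin(ζ)/ζ attains a local minimum (equivalently, the unique solution of tan ζ = ζ in the interval (π, 3π/2)), and set φ₀ = −sin(ζ₀)/ζ₀. Then for every integer ℓ ≥ 2 and every κ ∈ (0,1/2), one has K_ℓ ≥ p/(4κ(1+φ₀)), and equality holds if and only if κ = ζ₀/(2πℓ). -/

import Mathlib

open Real Set

noncomputable section

/-- The critical coupling `K_j = πjp / (2(2πjκ - sin(2πjκ)))`. -/
def Kc (p κ : ℝ) (j : ℕ) : ℝ :=
  π * j * p / (2 * (2 * π * j * κ - Real.sin (2 * π * j * κ)))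

/-! With `c = cos ζ₀`, the equation `tan ζ₀ = ζ₀` says that the line `y = c x` is tangent to the
graph of `sin` at `ζ₀`, and `φ₀ = -c`. This line lies strictly below `sin` on `(0, ∞)` away from
`ζ₀`: on `(0, π]` because `sin ≥ 0 > c x`, on `[π, 2π]` because `sin x - c x` decreases up to `ζ₀`
and increases after it, and on `[2π, ∞)` because `2π c < -1`. Putting `x = 2πℓκ`, this gives
`x - sin x ≥ x (1 + φ₀)`, i.e. `K_ℓ ≥ p / (4κ(1 + φ₀))`, with equality exactly when `x = ζ₀`. -/

namespace Real

lemma cos_lt_cos_of_pi_le_of_le_two_pi {a b : ℝ} (ha : π ≤ a) (hab : a < b) (hb : b ≤ 2 * π) :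
    cos a < cos b := by
  rw [← cos_two_pi_sub a, ← cos_two_pi_sub b]
  exact cos_lt_cos_of_nonneg_of_le_pi (by linarith) (by linarith) (by linarith)

lemma sin_eq_mul_cos_of_tan_eq_self {ζ : ℝ} (hc : cos ζ ≠ 0) (h : tan ζ = ζ) :
    sin ζ = ζ * cos ζ := by
  rwa [tan_eq_sin_div_cos, div_eq_iff hc] at h

lemma cos_sq_mul_one_add_sq_of_sin_eq {ζ : ℝ} (h : sin ζ = ζ * cos ζ) :
    cos ζ ^ 2 * (1 + ζ ^ 2) = 1 := by
  linear_combination sin_sq_add_cos_sq ζ - (sin ζ + ζ * cos ζ) * h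

section TangentLine

variable {ζ : ℝ}

lemma cos_neg_of_mem_Ioo_pi (hζ : ζ ∈ Ioo π (3 * π / 2)) : cos ζ < 0 :=
  cos_neg_of_pi_div_two_lt_of_lt (by linarith [pi_pos, hζ.1]) (by linarith [hζ.2])

lemma hasDerivAt_sin_sub_mul (c x : ℝ) :
    HasDerivAt (fun y ↦ sin y - c * y) (cos x - c) x :=
  ((hasDerivAt_sin x).sub ((hasDerivAt_id' x).const_mul c)).congr_deriv (by ring)

lemma strictAntiOn_sin_sub_mul_cos (hζ : ζ ≤ 2 * π) :
    StrictAntiOn (fun x ↦ sin x - cos ζ * x) (Icc π ζ) := by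
  refine strictAntiOn_of_deriv_neg (convex_Icc _ _) (by fun_prop) fun x hx ↦ ?_
  rw [interior_Icc] at hx
  rw [(hasDerivAt_sin_sub_mul _ x).deriv, sub_neg]
  exact cos_lt_cos_of_pi_le_of_le_two_pi hx.1.le hx.2 hζ

lemma strictMonoOn_sin_sub_mul_cos (hζ : π ≤ ζ) :
    StrictMonoOn (fun x ↦ sin x - cos ζ * x) (Icc ζ (2 * π)) := by
  refine strictMonoOn_of_deriv_pos (convex_Icc _ _) (by fun_prop) fun x hx ↦ ?_
  rw [interior_Icc] at hx
  rw [(hasDerivAt_sin_sub_mul _ x).deriv, sub_pos]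
  exact cos_lt_cos_of_pi_le_of_le_two_pi hζ hx.1 hx.2.le

lemma two_pi_mul_cos_lt_neg_one (hζ : ζ ∈ Ioo π (3 * π / 2)) (hsin : sin ζ = ζ * cos ζ) :
    2 * π * cos ζ < -1 := by
  have hc := cos_neg_of_mem_Ioo_pi hζ
  obtain ⟨hπζ, hζ⟩ := hζ
  have hsq := cos_sq_mul_one_add_sq_of_sin_eq hsin
  -- `ζ² < 9π²/4 < 4π² - 1`, so `(2π cos ζ)² = 4π² cos² ζ > (1 + ζ²) cos² ζ = 1`
  have hζsq : 1 + ζ ^ 2 < 4 * π ^ 2 := by nlinarith [pi_gt_three]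
  have hgt : 1 < (2 * π * cos ζ) ^ 2 := by nlinarith [pow_pos (neg_pos.2 hc) 2]
  nlinarith [mul_neg_of_pos_of_neg (by positivity : (0 : ℝ) < 2 * π) hc]

lemma cos_mul_lt_sin (hζ : ζ ∈ Ioo π (3 * π / 2)) (hsin : sin ζ = ζ * cos ζ) {x : ℝ}
    (hx : 0 < x) (hxζ : x ≠ ζ) : cos ζ * x < sin x := by
  have hc := cos_neg_of_mem_Ioo_pi hζ
  have h2π := two_pi_mul_cos_lt_neg_one hζ hsin
  obtain ⟨hπζ, hζπ⟩ := hζ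
  have hzero : sin ζ - cos ζ * ζ = 0 := by rw [hsin]; ring
  rcases le_or_gt x π with hxπ | hπx
  · exact (mul_neg_of_neg_of_pos hc hx).trans_le (sin_nonneg_of_nonneg_of_le_pi hx.le hxπ)
  rcases le_or_gt (2 * π) x with h2πx | hx2π
  · nlinarith [neg_one_le_sin x, h2π]
  rcases hxζ.lt_or_gt with hlt | hgt
  · have := strictAntiOn_sin_sub_mul_cos (by linarith) ⟨hπx.le, hlt.le⟩ ⟨hπζ.le, le_rfl⟩ hlt
    simp only at this
    linarith
  · have := strictMonoOn_sin_sub_mul_cos hπζ.le ⟨le_rfl, by linarith⟩ ⟨hgt.le, hx2π.le⟩ hgt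
    simp only at this
    linarith

lemma cos_mul_le_sin (hζ : ζ ∈ Ioo π (3 * π / 2)) (hsin : sin ζ = ζ * cos ζ) {x : ℝ}
    (hx : 0 < x) : cos ζ * x ≤ sin x := by
  rcases eq_or_ne x ζ with rfl | hxζ
  · rw [hsin, mul_comm]
  · exact (cos_mul_lt_sin hζ hsin hx hxζ).le

lemma sin_eq_cos_mul_iff (hζ : ζ ∈ Ioo π (3 * π / 2)) (hsin : sin ζ = ζ * cos ζ) {x : ℝ}
    (hx : 0 < x) : sin x = cos ζ * x ↔ x = ζ := by
  refine ⟨fun h ↦ ?_, ?_⟩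
  · by_contra hxζ
    exact (cos_mul_lt_sin hζ hsin hx hxζ).ne' h
  · rintro rfl
    rw [hsin, mul_comm]

end TangentLine

end Real

/-- Proposition 3.1(ii): with `ζ₀` the unique solution of `tan ζ = ζ` in `(π, 3π/2)` (the
smallest positive local minimum point of `ζ ↦ sin ζ / ζ`) and `φ₀ = -sin ζ₀ / ζ₀`, one has
`K_ℓ ≥ p/(4κ(1+φ₀))` for all `ℓ ≥ 2` and `κ ∈ (0,1/2)`, with equality iff `κ = ζ₀/(2πℓ)`. -/
theorem Kc_lower_bound
    (p : ℝ) (hp : 0 < p)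
    (ζ₀ : ℝ) (hζ₀mem : ζ₀ ∈ Set.Ioo π (3 * π / 2)) (hζ₀ : Real.tan ζ₀ = ζ₀)
    (φ₀ : ℝ) (hφ₀ : φ₀ = -Real.sin ζ₀ / ζ₀) :
    ∀ ℓ : ℕ, 2 ≤ ℓ → ∀ κ ∈ Set.Ioo (0:ℝ) (1/2),
      p / (4 * κ * (1 + φ₀)) ≤ Kc p κ ℓ ∧
      (Kc p κ ℓ = p / (4 * κ * (1 + φ₀)) ↔ κ = ζ₀ / (2 * π * ℓ)) := by
  rintro ℓ hℓ κ ⟨hκ, -⟩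
  have hsin : sin ζ₀ = ζ₀ * cos ζ₀ :=
    sin_eq_mul_cos_of_tan_eq_self (cos_neg_of_mem_Ioo_pi hζ₀mem).ne hζ₀
  have hφ : φ₀ = -cos ζ₀ := by
    rw [hφ₀, hsin, neg_div, mul_div_cancel_left₀ _ (pi_pos.trans hζ₀mem.1).ne']
  have hℓpos : (0 : ℝ) < ℓ := by exact_mod_cast (by omega : 0 < ℓ)
  set x := 2 * π * ℓ * κ with hx_def
  have hx : 0 < x := by positivity
  have hnum : 0 < π * ℓ * p := by positivity
  have hKc : Kc p κ ℓ = π * ℓ * p / (2 * (x - sin x)) := rfl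
  have hbound : p / (4 * κ * (1 + φ₀)) = π * ℓ * p / (2 * (x - cos ζ₀ * x)) := by
    rw [hφ, hx_def]
    field_simp
    ring
  have hsin_lt : sin x < x := sin_lt hx
  have hle : cos ζ₀ * x ≤ sin x := cos_mul_le_sin hζ₀mem hsin hx
  rw [hKc, hbound]
  refine ⟨div_le_div_of_nonneg_left hnum.le (by linarith) (by linarith), ?_⟩
  rw [div_eq_mul_inv, div_eq_mul_inv, mul_right_inj' hnum.ne', inv_inj, eq_div_iff (by positivity),
    mul_comm κ, ← hx_def, ← sin_eq_cos_mul_iff hζ₀mem hsin hx]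
  constructor <;> intro h <;> linarith
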